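/- Let λ∈P satisfy ⟨λ,α∨⟩≠−1 for all α∈Φ⁺ and let 𝐤∈ℕ[Φ]^W. Then the connected component Y of →_{sym,𝐤} containing η_𝐤(λ) contains the orbit w_λ(W_{I^{0,1}_λ}(η_𝐤(λ_dom))). Moreover, in the special case 𝐤=0, Y is exactly equal to w_λ(W_{I^{0,1}_λ}(λ_dom)). -/

import Mathlib

/-!
A symmetric interval-firing step along a positive root `α` changes `⟨μ, α∨⟩` by `2`, so
whenever `|⟨μ, α∨⟩| ≤ 𝐤(α) + 1` the weights `μ, μ + α, …` form a chain of firings joining `μ`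
to `s_α μ`. Put `ν = λ_dom + ρ_𝐤`. For `i ∈ I^{0,1}_λ` we have `⟨ν, αᵢ∨⟩ ∈ {𝐤(αᵢ), 𝐤(αᵢ) + 1}`,
and since Weyl group elements preserve pairings and `𝐤`, every simple reflection in a word
for `w ∈ W_{I^{0,1}_λ}` is realised by such a chain after transport by `w_λ`; this gives the
first claim, and the inclusion `⊇` of the second.

For `𝐤 = 0` a firing step is exactly a reflection `s_α` of a weight `μ` with `⟨μ, α∨⟩ = ±1`.
Pulled back to `λ_dom` such a step becomes `λ_dom ↦ λ_dom - γ` for a positive root `γ` with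
`⟨λ_dom, γ∨⟩ = 1`, and an induction on the height of `γ` (reducing `γ` by simple reflections)
shows `λ_dom - γ ∈ W_{I^{0,1}_λ}(λ_dom)`; along the way, a reflection fixing `λ_dom` lies in
the parabolic subgroup generated by the simple reflections fixing `λ_dom`.
-/

open RealInnerProductSpace Pointwise

noncomputable section

variable {V : Type*} [NormedAddCommGroup V] [InnerProductSpace ℝ V]

/-- The coroot `α∨ = 2α/⟨α,α⟩` associated to a vector `α`. -/
def coroot (α : V) : V := (2 / ⟪α, α⟫) • α

/-- The reflection `s_α(v) = v − ⟨v,α∨⟩α` across the hyperplane orthogonal to `α`. -/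
def sRefl (α : V) (v : V) : V := v - ⟪v, coroot α⟫ • α

/-- An irreducible reduced crystallographic root system in the real inner product
space `V`, together with a chosen set of positive roots and simple roots. -/
structure RootSystemData (V : Type*) [NormedAddCommGroup V] [InnerProductSpace ℝ V] where
  n : ℕ
  roots : Set V
  roots_finite : roots.Finite
  roots_nonzero : (0 : V) ∉ roots
  roots_span : Submodule.span ℝ roots = ⊤
  refl_mem : ∀ α ∈ roots, ∀ β ∈ roots, sRefl α β ∈ roots
  reduced : ∀ α ∈ roots, ∀ c : ℝ, c • α ∈ roots → c • α = α ∨ c • α = -α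
  crystallographic : ∀ α ∈ roots, ∀ β ∈ roots, ∃ m : ℤ, ⟪β, coroot α⟫ = (m : ℝ)
  pos : Set V
  pos_subset : pos ⊆ roots
  pos_union : roots = pos ∪ (-pos)
  simple : Fin n → V
  simple_mem : ∀ i, simple i ∈ pos
  simple_li : LinearIndependent ℝ simple
  simple_span : Submodule.span ℝ (Set.range simple) = ⊤
  pos_combo : ∀ α ∈ pos, ∃ c : Fin n → ℕ, α = ∑ i, (c i : ℝ) • simple i
  irred : ∀ S₁ S₂ : Set V, roots = S₁ ∪ S₂ →
    (∀ α ∈ S₁, ∀ β ∈ S₂, ⟪α, β⟫ = 0) → S₁ = ∅ ∨ S₂ = ∅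

namespace RootSystemData

variable (R : RootSystemData V)

/-- The Weyl group `W`: all finite compositions of reflections in roots. -/
def weyl : Set (V → V) :=
  {w | ∃ l : List V, (∀ α ∈ l, α ∈ R.roots) ∧ w = (l.map sRefl).foldr (· ∘ ·) id}

/-- The orbit `W(v)` of a vector under the Weyl group. -/
def orbit (v : V) : Set V := {u | ∃ w ∈ R.weyl, u = w v}

/-- The weight lattice `P`. -/
def weightLattice : Set V :=
  {v | ∀ α ∈ R.roots, ∃ m : ℤ, ⟪v, coroot α⟫ = (m : ℝ)}

/-- The permutohedron `Π(v) = ConvexHull W(v)`. -/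
def perm (v : V) : Set V := convexHull ℝ (R.orbit v)

/-- The discrete permutohedron `Π^Q(λ) = Π(λ) ∩ (Q+λ)`. -/
def permQ (lam : V) : Set V :=
  R.perm lam ∩ {v | v - lam ∈ Submodule.span ℤ R.roots}

/-- Dominance: nonnegative pairing with all simple coroots. -/
def IsDominant (v : V) : Prop := ∀ i, 0 ≤ ⟪v, coroot (R.simple i)⟫

/-- `W`-invariance of a function `𝐤 : Φ → ℕ`. -/
def IsWInvariant (k : V → ℕ) : Prop := ∀ w ∈ R.weyl, ∀ α ∈ R.roots, k (w α) = k α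

/-- Symmetric interval-firing: `λ → λ+α` for `α ∈ Φ⁺` whenever
`⟨λ,α∨⟩+1 ∈ {−𝐤(α),…,𝐤(α)}`. -/
def symFire (k : V → ℕ) (lam mu : V) : Prop :=
  lam ∈ R.weightLattice ∧ ∃ α ∈ R.pos, mu = lam + α ∧
    -(k α : ℝ) ≤ ⟪lam, coroot α⟫ + 1 ∧ ⟪lam, coroot α⟫ + 1 ≤ (k α : ℝ)

/-- Truncated interval-firing: `λ → λ+α` for `α ∈ Φ⁺` whenever
`⟨λ,α∨⟩+1 ∈ {−𝐤(α)+1,…,𝐤(α)}`. -/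
def trFire (k : V → ℕ) (lam mu : V) : Prop :=
  lam ∈ R.weightLattice ∧ ∃ α ∈ R.pos, mu = lam + α ∧
    -(k α : ℝ) + 1 ≤ ⟪lam, coroot α⟫ + 1 ∧ ⟪lam, coroot α⟫ + 1 ≤ (k α : ℝ)

/-- All roots have the same length. -/
def SimplyLaced : Prop := ∀ α ∈ R.roots, ∀ β ∈ R.roots, ‖α‖ = ‖β‖

/-- A root of maximal length. -/
def IsLongRoot (α : V) : Prop := α ∈ R.roots ∧ ∀ β ∈ R.roots, ‖β‖ ≤ ‖α‖

/-- A root which is not of maximal length. -/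
def IsShortRoot (α : V) : Prop := α ∈ R.roots ∧ ¬ R.IsLongRoot α

/-- `𝐤` is good: either `Φ` is simply laced, or `𝐤` vanishing on short roots
implies `𝐤` vanishing on all (in particular long) roots. -/
def IsGood (k : V → ℕ) : Prop :=
  R.SimplyLaced ∨ ((∀ α, R.IsShortRoot α → k α = 0) → ∀ β ∈ R.roots, k β = 0)

/-- The product of the simple reflections indexed by a word. -/
def wordProd (l : List (Fin R.n)) : V → V :=
  (l.map (fun i => sRefl (R.simple i))).foldr (· ∘ ·) id

/-- Coxeter length: the minimal length of a word in the simple reflections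
expressing `w`. -/
def coxLen (w : V → V) : ℕ :=
  sInf {m : ℕ | ∃ l : List (Fin R.n), l.length = m ∧ w = R.wordProd l}

/-- The parabolic subgroup `W_I`: all compositions of simple reflections `s_{αᵢ}`, `i ∈ I`. -/
def weylI (I : Set (Fin R.n)) : Set (V → V) :=
  {w | ∃ l : List (Fin R.n), (∀ i ∈ l, i ∈ I) ∧ w = R.wordProd l}

/-- The orbit `W_I(v)`. -/
def orbitI (I : Set (Fin R.n)) (v : V) : Set V := {u | ∃ w ∈ R.weylI I, u = w v}

/-- The discrete parabolic permutohedron `Π^Q_I(λ)`. -/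
def permQI (I : Set (Fin R.n)) (lam : V) : Set V :=
  convexHull ℝ (R.orbitI I lam) ∩ {v | v - lam ∈ Submodule.span ℤ R.roots}

/-- Given a choice `dm` of dominant representatives, `I^{0,1}_λ` is the set of
indices `i` with `⟨λ_dom, αᵢ∨⟩ ∈ {0,1}`. -/
def I01 (dm : V → V) (lam : V) : Set (Fin R.n) :=
  {i | ⟪dm lam, coroot (R.simple i)⟫ = 0 ∨ ⟪dm lam, coroot (R.simple i)⟫ = 1}

/-- The minimal length of an `α`-traverse in `Π^Q(λ)`. -/
def traverseLen (lam α : V) : ℕ :=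
  sInf {ℓ : ℕ | ∃ mu : V, (∀ i : ℕ, i ≤ ℓ → mu - (i : ℝ) • α ∈ R.permQ lam) ∧
    mu + α ∉ R.permQ lam ∧ mu - ((ℓ : ℝ) + 1) • α ∉ R.permQ lam}

/-- `m_λ(α) = min {cᵢ : αᵢ ∈ W(α)}` where `λ = Σ cᵢ ωᵢ` is dominant,
i.e. `cᵢ = ⟨λ, αᵢ∨⟩`. -/
def mVal (lam α : V) : ℕ :=
  sInf {c : ℕ | ∃ i, R.simple i ∈ R.orbit α ∧ (c : ℝ) = ⟪lam, coroot (R.simple i)⟫}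

/-- Funny weights (only exist when `Φ` is not simply laced). -/
def IsFunny (lam : V) : Prop :=
  ¬ R.SimplyLaced ∧ ∃ l s : Fin R.n, R.IsLongRoot (R.simple l) ∧ R.IsShortRoot (R.simple s) ∧
    ⟪R.simple l, coroot (R.simple s)⟫ ≠ 0 ∧
    ⟪lam, coroot (R.simple s)⟫ = 0 ∧ 1 ≤ ⟪lam, coroot (R.simple l)⟫ ∧
    ∀ i, R.IsLongRoot (R.simple i) → ⟪lam, coroot (R.simple l)⟫ ≤ ⟪lam, coroot (R.simple i)⟫

end RootSystemData

/-- The map `η_𝐤(λ) = λ + w_λ(ρ_𝐤)`, relative to a choice `fw` of fundamental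
weights and a choice `wl` of minimal-length Weyl elements `λ ↦ w_λ`. -/
def etaMap (R : RootSystemData V) (fw : Fin R.n → V) (wl : V → V → V)
    (k : V → ℕ) (lam : V) : V :=
  lam + wl lam (∑ i, (k (R.simple i) : ℝ) • fw i)

/-- Two points are in the same connected component of a relation if they are
related by its reflexive-transitive-symmetric closure. -/
def SameComponent (r : V → V → Prop) (x y : V) : Prop :=
  Relation.ReflTransGen (fun a b => r a b ∨ r b a) x y

theorem SameComponent.symm {X : Type*} {r : X → X → Prop} {x y : X}
    (h : SameComponent r x y) : SameComponent r y x :=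
  (Relation.ReflTransGen.stdSymm (r := Relation.SymmGen r)).symm _ _ h

lemma inner_coroot (v α : V) : ⟪v, coroot α⟫ = 2 / ⟪α, α⟫ * ⟪v, α⟫ := by
  simp [coroot, real_inner_smul_right]

lemma inner_self_coroot {α : V} (hα : α ≠ 0) : ⟪α, coroot α⟫ = 2 := by
  rw [inner_coroot, div_mul_cancel₀ _ (inner_self_ne_zero.2 hα)]

lemma inner_coroot_pos_iff {v α : V} (hα : α ≠ 0) : 0 < ⟪v, coroot α⟫ ↔ 0 < ⟪v, α⟫ := by
  rw [inner_coroot, mul_pos_iff_of_pos_left (div_pos two_pos (real_inner_self_pos.2 hα))]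

lemma inner_coroot_nonneg_iff {v α : V} (hα : α ≠ 0) : 0 ≤ ⟪v, coroot α⟫ ↔ 0 ≤ ⟪v, α⟫ := by
  rw [inner_coroot, mul_nonneg_iff_of_pos_left (div_pos two_pos (real_inner_self_pos.2 hα))]

lemma inner_coroot_pos_comm {α β : V} (hα : α ≠ 0) (hβ : β ≠ 0) :
    0 < ⟪β, coroot α⟫ ↔ 0 < ⟪α, coroot β⟫ := by
  rw [inner_coroot_pos_iff hα, inner_coroot_pos_iff hβ, real_inner_comm]

lemma coroot_neg (α : V) : coroot (-α) = -coroot α := by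
  simp [coroot]

lemma sRefl_apply (α v : V) : sRefl α v = v - ⟪v, coroot α⟫ • α := rfl

lemma sRefl_neg (α : V) : sRefl (-α) = sRefl α := by
  funext v; simp [sRefl, coroot_neg]

lemma sRefl_self {α : V} (hα : α ≠ 0) : sRefl α α = -α := by
  rw [sRefl_apply, inner_self_coroot hα]; module

lemma sRefl_of_inner_coroot_eq_zero {α v : V} (h : ⟪v, coroot α⟫ = 0) : sRefl α v = v := by
  rw [sRefl_apply, h, zero_smul, sub_zero]

lemma sRefl_sRefl (α v : V) : sRefl α (sRefl α v) = v := by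
  rcases eq_or_ne α 0 with rfl | hα
  · simp [sRefl, coroot]
  simp only [sRefl_apply, inner_sub_left, real_inner_smul_left, inner_self_coroot hα]
  module

def sReflEquiv (α : V) : V ≃ₗᵢ[ℝ] V :=
  LinearEquiv.isometryOfInner
    (LinearEquiv.ofInvolutive
      { toFun := sRefl α
        map_add' := fun x y => by simp only [sRefl_apply, inner_add_left, add_smul]; abel
        map_smul' := fun c x => by
          simp only [sRefl_apply, real_inner_smul_left, smul_sub, mul_smul, RingHom.id_apply] }
      (sRefl_sRefl α))
    (fun x y => by
      change ⟪sRefl α x, sRefl α y⟫ = ⟪x, y⟫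
      rcases eq_or_ne α 0 with rfl | hα
      · simp [sRefl, coroot]
      simp only [sRefl_apply, inner_sub_left, inner_sub_right, real_inner_smul_left,
        real_inner_smul_right, inner_coroot, real_inner_comm α y, real_inner_self_eq_norm_sq]
      field_simp
      ring)

@[simp] lemma coe_sReflEquiv (α : V) : ⇑(sReflEquiv α) = sRefl α := rfl

@[simp] lemma coe_sReflEquiv_symm (α : V) : ⇑(sReflEquiv α).symm = sRefl α := by
  funext x
  rw [LinearIsometryEquiv.symm_apply_eq, coe_sReflEquiv, sRefl_sRefl]

lemma sRefl_sub (α x y : V) : sRefl α (x - y) = sRefl α x - sRefl α y :=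
  map_sub (sReflEquiv α) x y

lemma coroot_map (f : V ≃ₗᵢ[ℝ] V) (x : V) : coroot (f x) = f (coroot x) := by
  rw [coroot, coroot, LinearIsometryEquiv.inner_map_map, map_smul]

lemma inner_map_coroot_map (f : V ≃ₗᵢ[ℝ] V) (x y : V) :
    ⟪f x, coroot (f y)⟫ = ⟪x, coroot y⟫ := by
  rw [coroot_map, LinearIsometryEquiv.inner_map_map]

lemma sRefl_map (f : V ≃ₗᵢ[ℝ] V) (α x : V) : sRefl (f α) (f x) = f (sRefl α x) := by
  rw [sRefl_apply, sRefl_apply, inner_map_coroot_map, map_sub, map_smul]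

lemma inner_sRefl_coroot (α x y : V) : ⟪sRefl α x, coroot (sRefl α y)⟫ = ⟪x, coroot y⟫ :=
  inner_map_coroot_map (sReflEquiv α) x y

lemma sRefl_sRefl_eq_comp (α β : V) :
    sRefl (sRefl α β) = sRefl α ∘ sRefl β ∘ sRefl α := by
  funext v
  simpa [sRefl_sRefl] using sRefl_map (sReflEquiv α) β (sRefl α v)

lemma inner_coroot_sRefl (α v γ : V) :
    ⟪v, coroot (sRefl α γ)⟫ = ⟪v, coroot γ⟫ - ⟪v, coroot α⟫ * ⟪α, coroot γ⟫ := by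
  rw [← inner_sRefl_coroot α v, sRefl_sRefl, sRefl_apply α v, inner_sub_left, real_inner_smul_left]

namespace RootSystemData

variable (R : RootSystemData V)

lemma ne_zero_of_mem_roots {α : V} (hα : α ∈ R.roots) : α ≠ 0 := by
  rintro rfl; exact R.roots_nonzero hα

lemma simple_mem_roots (i : Fin R.n) : R.simple i ∈ R.roots :=
  R.pos_subset (R.simple_mem i)

lemma simple_ne_zero (i : Fin R.n) : R.simple i ≠ 0 :=
  R.ne_zero_of_mem_roots (R.simple_mem_roots i)

lemma mem_pos_or_neg_mem_pos {α : V} (hα : α ∈ R.roots) : α ∈ R.pos ∨ -α ∈ R.pos := by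
  rw [R.pos_union] at hα
  exact hα.imp id (by simp)

lemma neg_mem_roots {α : V} (hα : α ∈ R.roots) : -α ∈ R.roots := by
  rw [R.pos_union] at hα ⊢
  exact hα.symm.imp (by simp) (by simp)

lemma root_mem_weightLattice {α : V} (hα : α ∈ R.roots) : α ∈ R.weightLattice :=
  fun β hβ => R.crystallographic β hβ α hα

lemma add_zsmul_mem_weightLattice {v α : V} (hv : v ∈ R.weightLattice)
    (hα : α ∈ R.weightLattice) (t : ℤ) : v + (t : ℝ) • α ∈ R.weightLattice := by
  intro β hβ
  obtain ⟨m₁, h₁⟩ := hv β hβ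
  obtain ⟨m₂, h₂⟩ := hα β hβ
  exact ⟨m₁ + t * m₂, by rw [inner_add_left, real_inner_smul_left, h₁, h₂]; push_cast; ring⟩

lemma add_mem_weightLattice {u v : V} (hu : u ∈ R.weightLattice) (hv : v ∈ R.weightLattice) :
    u + v ∈ R.weightLattice := by
  simpa using R.add_zsmul_mem_weightLattice hu hv 1

lemma sRefl_mem_weightLattice {v : V} (hv : v ∈ R.weightLattice) {α : V} (hα : α ∈ R.roots) :
    sRefl α v ∈ R.weightLattice := by
  obtain ⟨m, hm⟩ := hv α hα
  convert R.add_zsmul_mem_weightLattice hv (R.root_mem_weightLattice hα) (-m) using 1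
  rw [sRefl_apply, hm]; push_cast; module

lemma one_le_inner_coroot {v α : V} (hv : v ∈ R.weightLattice) (hα : α ∈ R.roots)
    (h : 0 < ⟪v, coroot α⟫) : 1 ≤ ⟪v, coroot α⟫ := by
  obtain ⟨m, hm⟩ := hv α hα
  rw [hm] at h ⊢
  exact_mod_cast (Int.cast_pos.1 h : 0 < m)

lemma weyl_induction {P : (V → V) → Prop} (h_id : P id)
    (h_refl : ∀ α ∈ R.roots, ∀ w, P w → P (sRefl α ∘ w)) {w : V → V} (hw : w ∈ R.weyl) :
    P w := by
  obtain ⟨l, hl, rfl⟩ := hw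
  induction l with
  | nil => exact h_id
  | cons α l ih =>
    exact h_refl α (hl α List.mem_cons_self) _ (ih fun β hβ => hl β (List.mem_cons_of_mem α hβ))

lemma id_mem_weyl : (id : V → V) ∈ R.weyl := ⟨[], by simp, rfl⟩

lemma sRefl_comp_mem_weyl {α : V} (hα : α ∈ R.roots) {w : V → V} (hw : w ∈ R.weyl) :
    sRefl α ∘ w ∈ R.weyl := by
  obtain ⟨l, hl, rfl⟩ := hw
  exact ⟨α :: l, by simpa [hα] using hl, rfl⟩

lemma sRefl_mem_weyl {α : V} (hα : α ∈ R.roots) : sRefl α ∈ R.weyl :=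
  R.sRefl_comp_mem_weyl hα R.id_mem_weyl

lemma comp_mem_weyl {w₁ w₂ : V → V} (hw₁ : w₁ ∈ R.weyl) (hw₂ : w₂ ∈ R.weyl) :
    w₁ ∘ w₂ ∈ R.weyl :=
  R.weyl_induction (P := fun w => w ∘ w₂ ∈ R.weyl) hw₂
    (fun _ hα _ hw => R.sRefl_comp_mem_weyl hα hw) hw₁

lemma map_mem_roots {w : V → V} (hw : w ∈ R.weyl) {α : V} (hα : α ∈ R.roots) :
    w α ∈ R.roots :=
  R.weyl_induction (P := fun w => w α ∈ R.roots) hα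
    (fun β hβ _ h => R.refl_mem β hβ _ h) hw

lemma map_mem_weightLattice {w : V → V} (hw : w ∈ R.weyl) {v : V}
    (hv : v ∈ R.weightLattice) : w v ∈ R.weightLattice :=
  R.weyl_induction (P := fun w => w v ∈ R.weightLattice) hv
    (fun _ hβ _ h => R.sRefl_mem_weightLattice h hβ) hw

lemma exists_linearIsometryEquiv_of_mem_weyl {w : V → V} (hw : w ∈ R.weyl) :
    ∃ f : V ≃ₗᵢ[ℝ] V, ⇑f = w ∧ ⇑f.symm ∈ R.weyl :=
  R.weyl_induction (P := fun w => ∃ f : V ≃ₗᵢ[ℝ] V, ⇑f = w ∧ ⇑f.symm ∈ R.weyl)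
    ⟨LinearIsometryEquiv.refl ℝ V, rfl, R.id_mem_weyl⟩
    (fun α hα _ ⟨f, hf, hfs⟩ => ⟨f.trans (sReflEquiv α), by simp [hf],
      by simpa using R.comp_mem_weyl hfs (R.sRefl_mem_weyl hα)⟩) hw

variable {R} in
lemma IsWInvariant.apply_neg {k : V → ℕ} (hk : R.IsWInvariant k) {α : V} (hα : α ∈ R.roots) :
    k (-α) = k α := by
  simpa [sRefl_self (R.ne_zero_of_mem_roots hα)] using hk _ (R.sRefl_mem_weyl hα) α hα

def simpleBasis : Module.Basis (Fin R.n) ℝ V := .mk R.simple_li R.simple_span.ge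

lemma simpleBasis_apply (i : Fin R.n) : R.simpleBasis i = R.simple i :=
  Module.Basis.mk_apply _ _ i

def height (v : V) : ℝ := ∑ i, R.simpleBasis.repr v i

lemma height_sub_smul_simple (v : V) (t : ℝ) (j : Fin R.n) :
    R.height (v - t • R.simple j) = R.height v - t := by
  simp only [height, ← R.simpleBasis_apply, map_sub, map_smul, R.simpleBasis.repr_self]
  simp [Finsupp.single_apply, Finset.sum_sub_distrib]

lemma repr_nonneg_of_mem_pos {γ : V} (hγ : γ ∈ R.pos) (i : Fin R.n) :
    0 ≤ R.simpleBasis.repr γ i := by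
  obtain ⟨c, rfl⟩ := R.pos_combo γ hγ
  simp_rw [← R.simpleBasis_apply, Module.Basis.repr_sum_self]
  positivity

lemma height_nonneg {γ : V} (hγ : γ ∈ R.pos) : 0 ≤ R.height γ :=
  Finset.sum_nonneg fun i _ => R.repr_nonneg_of_mem_pos hγ i

lemma neg_notMem_pos {γ : V} (hγ : γ ∈ R.pos) : -γ ∉ R.pos := by
  intro hγ'
  apply R.ne_zero_of_mem_roots (R.pos_subset hγ)
  refine R.simpleBasis.ext_elem fun i => le_antisymm ?_ ?_
  · simpa using R.repr_nonneg_of_mem_pos hγ' i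
  · simpa using R.repr_nonneg_of_mem_pos hγ i

lemma exists_repr_pos_of_ne_simple {γ : V} (hγ : γ ∈ R.pos) {j : Fin R.n}
    (hne : γ ≠ R.simple j) : ∃ i ≠ j, 0 < R.simpleBasis.repr γ i := by
  by_contra! h
  have hγj : γ = R.simpleBasis.repr γ j • R.simple j := by
    conv_lhs => rw [← R.simpleBasis.sum_repr γ]
    refine (Finset.sum_eq_single j (fun i _ hij => ?_) (by simp)).trans (by rw [simpleBasis_apply])
    rw [le_antisymm (h i hij) (R.repr_nonneg_of_mem_pos hγ i), zero_smul]
  rcases R.reduced _ (R.simple_mem_roots j) _ (hγj ▸ R.pos_subset hγ) with h' | h'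
  · exact hne (hγj.trans h')
  · exact R.neg_notMem_pos (R.simple_mem j) (by rw [← h', ← hγj]; exact hγ)

-- The coordinates of `γ - t αⱼ` away from `j` are those of `γ`, one of which is positive.
lemma sub_smul_simple_mem_pos {γ : V} (hγ : γ ∈ R.pos) {j : Fin R.n} (hne : γ ≠ R.simple j)
    {t : ℝ} (hroot : γ - t • R.simple j ∈ R.roots) : γ - t • R.simple j ∈ R.pos := by
  refine (R.mem_pos_or_neg_mem_pos hroot).resolve_right fun hneg => ?_
  obtain ⟨i, hij, hi⟩ := R.exists_repr_pos_of_ne_simple hγ hne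
  have := R.repr_nonneg_of_mem_pos hneg i
  simp only [← R.simpleBasis_apply, map_neg, map_sub, map_smul, R.simpleBasis.repr_self] at this
  simp [Ne.symm hij] at this
  linarith

lemma exists_inner_coroot_simple_pos {γ : V} (hγ : γ ∈ R.pos) :
    ∃ j, 0 < ⟪γ, coroot (R.simple j)⟫ := by
  by_contra! h
  have hsum : ⟪γ, γ⟫ = ∑ i, R.simpleBasis.repr γ i * ⟪γ, R.simple i⟫ := by
    nth_rewrite 2 [← R.simpleBasis.sum_repr γ]
    simp [inner_sum, real_inner_smul_right, R.simpleBasis_apply]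
  have : ⟪γ, γ⟫ ≤ 0 := hsum ▸ Finset.sum_nonpos fun i _ =>
    mul_nonpos_of_nonneg_of_nonpos (R.repr_nonneg_of_mem_pos hγ i)
      (not_lt.1 fun hi => (h i).not_gt ((inner_coroot_pos_iff (R.simple_ne_zero i)).2 hi))
  exact R.ne_zero_of_mem_roots (R.pos_subset hγ) (real_inner_self_nonpos.1 this)

lemma exists_simple_descent {γ : V} (hγ : γ ∈ R.pos) :
    ∃ j, 0 < ⟪γ, coroot (R.simple j)⟫ ∧ (γ = R.simple j ∨ γ ≠ R.simple j ∧
      sRefl (R.simple j) γ ∈ R.pos ∧ R.height (sRefl (R.simple j) γ) + 1 ≤ R.height γ) := by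
  obtain ⟨j, hj⟩ := R.exists_inner_coroot_simple_pos hγ
  refine ⟨j, hj, or_iff_not_imp_left.2 fun hne => ⟨hne, ?_, ?_⟩⟩
  · exact R.sub_smul_simple_mem_pos hγ hne
      (R.refl_mem _ (R.simple_mem_roots j) _ (R.pos_subset hγ))
  · have := R.one_le_inner_coroot (R.root_mem_weightLattice (R.pos_subset hγ))
      (R.simple_mem_roots j) hj
    rw [sRefl_apply, height_sub_smul_simple]
    linarith

theorem pos_induction {P : V → Prop}
    (h : ∀ γ ∈ R.pos, (∀ δ ∈ R.pos, R.height δ + 1 ≤ R.height γ → P δ) → P γ)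
    {γ : V} (hγ : γ ∈ R.pos) : P γ := by
  suffices ∀ N : ℕ, ∀ γ ∈ R.pos, R.height γ ≤ N → P γ from this _ γ hγ (Nat.le_ceil _)
  intro N
  induction N with
  | zero =>
    exact fun γ hγ hN => h γ hγ fun δ hδ hle => by
      push_cast at hN; linarith [R.height_nonneg hδ]
  | succ N ih =>
    exact fun γ hγ hN => h γ hγ fun δ hδ hle => ih δ hδ (by push_cast at hN; linarith)

lemma mem_weightLattice_of_inner_simple {v : V}
    (h : ∀ j, ∃ m : ℤ, ⟪v, coroot (R.simple j)⟫ = m) : v ∈ R.weightLattice := by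
  have hpos : ∀ γ ∈ R.pos, ∃ m : ℤ, ⟪v, coroot γ⟫ = m := by
    refine fun γ hγ => R.pos_induction (P := fun γ => ∃ m : ℤ, ⟪v, coroot γ⟫ = m)
      (fun γ hγ ih => ?_) hγ
    obtain ⟨j, -, rfl | ⟨-, hpos', hht⟩⟩ := R.exists_simple_descent hγ
    · exact h j
    obtain ⟨m, hm⟩ := ih _ hpos' hht
    obtain ⟨mj, hmj⟩ := h j
    obtain ⟨m₂, hm₂⟩ := R.crystallographic _ (R.pos_subset hpos') _ (R.simple_mem_roots j)
    have := inner_coroot_sRefl (R.simple j) v (sRefl (R.simple j) γ)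
    rw [sRefl_sRefl, hm, hmj, hm₂] at this
    exact ⟨m - mj * m₂, by push_cast; exact this⟩
  intro γ hγ
  rcases R.mem_pos_or_neg_mem_pos hγ with hγ' | hγ'
  · exact hpos γ hγ'
  · obtain ⟨m, hm⟩ := hpos _ hγ'
    exact ⟨-m, by rw [coroot_neg, inner_neg_right] at hm; push_cast; linarith⟩

variable {R} in
lemma IsDominant.inner_coroot_nonneg {lamd : V} (hdom : R.IsDominant lamd) {δ : V}
    (hδ : δ ∈ R.pos) : 0 ≤ ⟪lamd, coroot δ⟫ := by
  rw [inner_coroot_nonneg_iff (R.ne_zero_of_mem_roots (R.pos_subset hδ))]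
  obtain ⟨c, rfl⟩ := R.pos_combo δ hδ
  rw [inner_sum]
  refine Finset.sum_nonneg fun i _ => ?_
  rw [real_inner_smul_right]
  exact mul_nonneg (Nat.cast_nonneg _) ((inner_coroot_nonneg_iff (R.simple_ne_zero i)).1 (hdom i))

lemma wordProd_cons (j : Fin R.n) (l : List (Fin R.n)) :
    R.wordProd (j :: l) = sRefl (R.simple j) ∘ R.wordProd l := rfl

lemma wordProd_append (l₁ l₂ : List (Fin R.n)) :
    R.wordProd (l₁ ++ l₂) = R.wordProd l₁ ∘ R.wordProd l₂ := by
  induction l₁ with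
  | nil => rfl
  | cons j l ih => rw [List.cons_append, wordProd_cons, wordProd_cons, ih]; rfl

lemma weylI_subset_weyl (I : Set (Fin R.n)) : R.weylI I ⊆ R.weyl := by
  rintro _ ⟨l, -, rfl⟩
  exact ⟨l.map R.simple, by simp [R.simple_mem_roots], by simp [wordProd, Function.comp_def]⟩

lemma weylI_mono {I J : Set (Fin R.n)} (hIJ : I ⊆ J) : R.weylI I ⊆ R.weylI J := by
  rintro _ ⟨l, hl, rfl⟩
  exact ⟨l, fun i hi => hIJ (hl i hi), rfl⟩

lemma sRefl_simple_mem_weylI {I : Set (Fin R.n)} {j : Fin R.n} (hj : j ∈ I) :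
    sRefl (R.simple j) ∈ R.weylI I :=
  ⟨[j], by simpa using hj, rfl⟩

lemma comp_mem_weylI {I : Set (Fin R.n)} {w₁ w₂ : V → V} (hw₁ : w₁ ∈ R.weylI I)
    (hw₂ : w₂ ∈ R.weylI I) : w₁ ∘ w₂ ∈ R.weylI I := by
  obtain ⟨l₁, hl₁, rfl⟩ := hw₁
  obtain ⟨l₂, hl₂, rfl⟩ := hw₂
  exact ⟨l₁ ++ l₂, by simpa [or_imp, forall_and] using ⟨hl₁, hl₂⟩, (R.wordProd_append l₁ l₂).symm⟩

lemma self_mem_orbitI (I : Set (Fin R.n)) (v : V) : v ∈ R.orbitI I v :=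
  ⟨id, ⟨[], by simp, rfl⟩, rfl⟩

lemma map_mem_orbitI {I : Set (Fin R.n)} {w : V → V} (hw : w ∈ R.weylI I) {u v : V}
    (hu : u ∈ R.orbitI I v) : w u ∈ R.orbitI I v := by
  obtain ⟨w', hw', rfl⟩ := hu
  exact ⟨w ∘ w', R.comp_mem_weylI hw hw', rfl⟩

lemma orbitI_mono {I J : Set (Fin R.n)} (hIJ : I ⊆ J) (v : V) : R.orbitI I v ⊆ R.orbitI J v :=
  fun _ ⟨w, hw, hu⟩ => ⟨w, R.weylI_mono hIJ hw, hu⟩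

theorem sRefl_mem_weylI_of_inner_coroot_eq_zero {lamd : V} (hdom : R.IsDominant lamd)
    {γ : V} (hγ : γ ∈ R.pos) (h0 : ⟪lamd, coroot γ⟫ = 0) :
    sRefl γ ∈ R.weylI {i | ⟪lamd, coroot (R.simple i)⟫ = 0} := by
  revert h0
  refine R.pos_induction (P := fun γ => ⟪lamd, coroot γ⟫ = 0 → sRefl γ ∈ R.weylI _)
    (fun γ hγ ih h0 => ?_) hγ
  obtain ⟨j, hd, rfl | ⟨-, hpos', hht⟩⟩ := R.exists_simple_descent hγ
  · exact R.sRefl_simple_mem_weylI h0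
  have he : 0 < ⟪R.simple j, coroot γ⟫ := (inner_coroot_pos_comm (R.simple_ne_zero j)
    (R.ne_zero_of_mem_roots (R.pos_subset hγ))).1 hd
  have hpair := inner_coroot_sRefl (R.simple j) lamd γ
  have hj : ⟪lamd, coroot (R.simple j)⟫ = 0 := by
    have := hdom.inner_coroot_nonneg hpos'
    nlinarith [hdom j]
  have hconj := sRefl_sRefl_eq_comp (R.simple j) (sRefl (R.simple j) γ)
  rw [sRefl_sRefl] at hconj
  rw [hconj]
  exact R.comp_mem_weylI (R.sRefl_simple_mem_weylI hj) (R.comp_mem_weylI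
    (ih _ hpos' hht (by rw [hpair, h0, hj]; ring)) (R.sRefl_simple_mem_weylI hj))

/-- The induction step for `sub_mem_orbitI_of_inner_coroot_eq_one` when `sⱼ` moves `lamd`:
then `γ' = sⱼ γ` is orthogonal to `lamd`, and `lamd - γ` is reached either directly as
`s_{γ'} sⱼ lamd` or, if `⟨γ, αⱼ∨⟩ ≥ 2`, from the lower root `δ = s_{γ'} αⱼ`. -/
lemma sub_mem_orbitI_of_inner_coroot_simple_eq_one {lamd : V} (hdom : R.IsDominant lamd)
    {I : Set (Fin R.n)} (hI : {i | ⟪lamd, coroot (R.simple i)⟫ = 0} ⊆ I) {γ : V}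
    (hγ : γ ∈ R.pos) {j : Fin R.n} (hjI : j ∈ I) (hne : γ ≠ R.simple j)
    (hpos' : sRefl (R.simple j) γ ∈ R.pos) (h1 : ⟪lamd, coroot γ⟫ = 1)
    (hj1 : ⟪lamd, coroot (R.simple j)⟫ = 1) (he1 : ⟪R.simple j, coroot γ⟫ = 1)
    (ih : ∀ δ ∈ R.pos, R.height δ + 1 ≤ R.height γ → ⟪lamd, coroot δ⟫ = 1 →
      lamd - δ ∈ R.orbitI I lamd) :
    lamd - γ ∈ R.orbitI I lamd := by
  have hαr := R.simple_mem_roots j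
  set γ' := sRefl (R.simple j) γ with hγ'def
  have h0' : ⟪lamd, coroot γ'⟫ = 0 := by rw [inner_coroot_sRefl, h1, hj1, he1]; ring
  have hfix' : sRefl γ' lamd = lamd := sRefl_of_inner_coroot_eq_zero h0'
  have hrefl : sRefl γ' ∈ R.weylI I :=
    R.weylI_mono hI (R.sRefl_mem_weylI_of_inner_coroot_eq_zero hdom hpos' h0')
  have haj : ⟪R.simple j, coroot γ'⟫ = -1 := by
    rw [inner_coroot_sRefl, inner_self_coroot (R.simple_ne_zero j), he1]; ring
  have hsj : lamd - R.simple j ∈ R.orbitI I lamd := by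
    have : sRefl (R.simple j) lamd = lamd - R.simple j := by rw [sRefl_apply, hj1, one_smul]
    exact this ▸ R.map_mem_orbitI (R.sRefl_simple_mem_weylI hjI) (R.self_mem_orbitI I lamd)
  obtain ⟨d, hd⟩ := R.crystallographic _ hαr γ (R.pos_subset hγ)
  have hγ' : γ' = γ - (d : ℝ) • R.simple j := by rw [hγ'def, sRefl_apply, hd]
  have hd1 : d = 1 ∨ 2 ≤ d := by
    have : (0 : ℝ) < d := hd ▸ (inner_coroot_pos_comm (R.simple_ne_zero j)
      (R.ne_zero_of_mem_roots (R.pos_subset hγ))).2 (by rw [he1]; norm_num)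
    norm_cast at this; omega
  rcases hd1 with rfl | hd2
  · have : sRefl γ' (lamd - R.simple j) = lamd - γ := by
      rw [sRefl_sub, hfix', sRefl_apply γ' (R.simple j), haj, hγ']
      module
    exact this ▸ R.map_mem_orbitI hrefl hsj
  set δ := sRefl γ' (R.simple j) with hδdef
  have hδ : δ = γ - ((d : ℝ) - 1) • R.simple j := by
    rw [hδdef, sRefl_apply, haj, hγ']; module
  have hδpos : δ ∈ R.pos := hδ ▸ R.sub_smul_simple_mem_pos hγ hne
    (hδ ▸ R.refl_mem _ (R.pos_subset hpos') _ hαr)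
  have hδht : R.height δ + 1 ≤ R.height γ := by
    have : (2 : ℝ) ≤ d := by exact_mod_cast hd2
    rw [hδ, height_sub_smul_simple]; linarith
  have hδpair : ⟪lamd, coroot δ⟫ = 1 := by
    rw [← hfix', hδdef, inner_sRefl_coroot, hj1]
  have : sRefl (R.simple j) (lamd - δ) = lamd - γ := by
    rw [sRefl_apply, hδ, inner_sub_left, inner_sub_left, real_inner_smul_left, hd,
      inner_self_coroot (R.simple_ne_zero j), hj1]
    module
  exact this ▸ R.map_mem_orbitI (R.sRefl_simple_mem_weylI hjI) (ih δ hδpos hδht hδpair)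

theorem sub_mem_orbitI_of_inner_coroot_eq_one {lamd : V} (hdom : R.IsDominant lamd)
    (hlat : lamd ∈ R.weightLattice) {γ : V} (hγ : γ ∈ R.pos) (h1 : ⟪lamd, coroot γ⟫ = 1) :
    lamd - γ ∈ R.orbitI {i | ⟪lamd, coroot (R.simple i)⟫ = 0 ∨ ⟪lamd, coroot (R.simple i)⟫ = 1}
      lamd := by
  set I := {i | ⟪lamd, coroot (R.simple i)⟫ = 0 ∨ ⟪lamd, coroot (R.simple i)⟫ = 1}
  revert h1
  refine R.pos_induction (P := fun γ => ⟪lamd, coroot γ⟫ = 1 → lamd - γ ∈ R.orbitI I lamd)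
    (fun γ hγ ih h1 => ?_) hγ
  obtain ⟨j, hd, rfl | ⟨hne, hpos', hht⟩⟩ := R.exists_simple_descent hγ
  · have : sRefl (R.simple j) lamd = lamd - R.simple j := by rw [sRefl_apply, h1, one_smul]
    exact this ▸ R.map_mem_orbitI (R.sRefl_simple_mem_weylI (Or.inr h1)) (R.self_mem_orbitI I _)
  have hγr := R.pos_subset hγ
  have hαr := R.simple_mem_roots j
  have he : 1 ≤ ⟪R.simple j, coroot γ⟫ := R.one_le_inner_coroot (R.root_mem_weightLattice hαr) hγr
    ((inner_coroot_pos_comm (R.simple_ne_zero j) (R.ne_zero_of_mem_roots hγr)).1 hd)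
  have hpair := inner_coroot_sRefl (R.simple j) lamd γ
  have hnn := hdom.inner_coroot_nonneg hpos'
  rcases (hdom j).eq_or_lt with hj | hj
  · -- `sⱼ` fixes `lamd` and maps `γ` to a lower root with the same pairing.
    have := R.map_mem_orbitI (R.sRefl_simple_mem_weylI (Or.inl hj.symm))
      (ih _ hpos' hht (by rw [hpair, h1, ← hj]; ring))
    rwa [sRefl_sub, sRefl_of_inner_coroot_eq_zero hj.symm, sRefl_sRefl] at this
  have hj1 : ⟪lamd, coroot (R.simple j)⟫ = 1 := by
    nlinarith [R.one_le_inner_coroot hlat hαr hj]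
  exact R.sub_mem_orbitI_of_inner_coroot_simple_eq_one hdom (fun i hi => Or.inl hi) hγ
    (Or.inr hj1) hne hpos' h1 hj1 (by nlinarith) ih

lemma sameComponent_sRefl_of_inner_coroot_nonpos {k : V → ℕ} {α μ : V} (hα : α ∈ R.pos)
    (hμ : μ ∈ R.weightLattice) (hneg : ⟪μ, coroot α⟫ ≤ 0)
    (hbound : -⟪μ, coroot α⟫ ≤ k α + 1) : SameComponent (R.symFire k) μ (sRefl α μ) := by
  have hα0 := R.ne_zero_of_mem_roots (R.pos_subset hα)
  obtain ⟨m, hm⟩ := hμ α (R.pos_subset hα)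
  obtain ⟨t, rfl⟩ := Int.exists_eq_neg_ofNat (by exact_mod_cast hm ▸ hneg : m ≤ 0)
  push_cast at hm hbound
  -- Fire `α` at `μ, μ + α, …, μ + (t - 1) α`; the pairings `-t + 1, -t + 3, …, t - 1` are allowed.
  have chain : ∀ s ≤ t, SameComponent (R.symFire k) μ (μ + (s : ℝ) • α) := by
    intro s
    induction s with
    | zero => intro _; rw [Nat.cast_zero, zero_smul, add_zero]; exact Relation.ReflTransGen.refl
    | succ s ih =>
      intro hs
      have hs' : (s : ℝ) + 1 ≤ t := by exact_mod_cast hs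
      refine Relation.ReflTransGen.tail (ih (by omega))
        (Or.inl ⟨?_, α, hα, by push_cast; module, ?_⟩)
      · exact_mod_cast
          R.add_zsmul_mem_weightLattice hμ (R.root_mem_weightLattice (R.pos_subset hα)) s
      · rw [inner_add_left, real_inner_smul_left, inner_self_coroot hα0, hm]
        constructor <;> linarith
  convert chain t le_rfl using 1
  rw [sRefl_apply, hm]; module

lemma sameComponent_sRefl {k : V → ℕ} (hk : R.IsWInvariant k) {β μ : V} (hβ : β ∈ R.roots)
    (hμ : μ ∈ R.weightLattice) (hbound : |⟪μ, coroot β⟫| ≤ k β + 1) :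
    SameComponent (R.symFire k) μ (sRefl β μ) := by
  wlog hpos : β ∈ R.pos generalizing β
  · have hneg := (R.mem_pos_or_neg_mem_pos hβ).resolve_left hpos
    rw [← sRefl_neg]
    refine this (R.neg_mem_roots hβ) ?_ hneg
    rwa [coroot_neg, inner_neg_right, abs_neg, hk.apply_neg hβ]
  rcases le_total ⟪μ, coroot β⟫ 0 with hle | hge
  · exact R.sameComponent_sRefl_of_inner_coroot_nonpos hpos hμ hle
      (by linarith [neg_le_abs ⟪μ, coroot β⟫])
  · have hself : ⟪sRefl β μ, coroot β⟫ = -⟪μ, coroot β⟫ := by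
      rw [sRefl_apply, inner_sub_left, real_inner_smul_left,
        inner_self_coroot (R.ne_zero_of_mem_roots hβ)]
      ring
    have := R.sameComponent_sRefl_of_inner_coroot_nonpos hpos (R.sRefl_mem_weightLattice hμ hβ)
      (by linarith) (by linarith [le_abs_self ⟪μ, coroot β⟫])
    rw [sRefl_sRefl] at this
    exact this.symm

lemma sameComponent_map_sRefl {k : V → ℕ} (hk : R.IsWInvariant k) {g : V → V} (hg : g ∈ R.weyl)
    {β μ : V} (hβ : β ∈ R.roots) (hμ : μ ∈ R.weightLattice)
    (hbound : |⟪μ, coroot β⟫| ≤ k β + 1) :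
    SameComponent (R.symFire k) (g μ) (g (sRefl β μ)) := by
  obtain ⟨f, rfl, -⟩ := R.exists_linearIsometryEquiv_of_mem_weyl hg
  rw [← sRefl_map]
  refine R.sameComponent_sRefl hk (R.map_mem_roots hg hβ) (R.map_mem_weightLattice hg hμ) ?_
  rwa [inner_map_coroot_map, hk _ hg _ hβ]

lemma sameComponent_map_of_mem_weylI {k : V → ℕ} (hk : R.IsWInvariant k) {g : V → V}
    (hg : g ∈ R.weyl) {ν : V} (hν : ν ∈ R.weightLattice) {I : Set (Fin R.n)}
    (hI : ∀ j ∈ I, |⟪ν, coroot (R.simple j)⟫| ≤ k (R.simple j) + 1) {w : V → V}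
    (hw : w ∈ R.weylI I) : SameComponent (R.symFire k) (g ν) (g (w ν)) := by
  obtain ⟨l, hl, rfl⟩ := hw
  induction l generalizing g with
  | nil => exact Relation.ReflTransGen.refl
  | cons j l ih =>
    exact Relation.ReflTransGen.trans
      (R.sameComponent_map_sRefl hk hg (R.simple_mem_roots j) hν (hI j (hl j List.mem_cons_self)))
      (ih (R.comp_mem_weyl hg (R.sRefl_mem_weyl (R.simple_mem_roots j)))
        fun i hi => hl i (List.mem_cons_of_mem j hi))

lemma exists_sRefl_of_symFire_zero {b c : V}
    (h : R.symFire (fun _ => 0) b c ∨ R.symFire (fun _ => 0) c b) :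
    ∃ α ∈ R.roots, ⟪b, coroot α⟫ = 1 ∧ c = sRefl α b := by
  rcases h with ⟨-, α, hα, rfl, h₁, h₂⟩ | ⟨-, α, hα, rfl, h₁, h₂⟩
  · refine ⟨-α, R.neg_mem_roots (R.pos_subset hα), ?_, ?_⟩
    · rw [coroot_neg, inner_neg_right]; push_cast at h₁ h₂; linarith
    · rw [sRefl_apply, coroot_neg, inner_neg_right, (by push_cast at h₁ h₂; linarith :
        ⟪b, coroot α⟫ = -1)]
      module
  · have hc : ⟪c, coroot α⟫ = -1 := by push_cast at h₁ h₂; linarith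
    have hb : ⟪c + α, coroot α⟫ = 1 := by
      rw [inner_add_left, inner_self_coroot (R.ne_zero_of_mem_roots (R.pos_subset hα)), hc]; ring
    exact ⟨α, R.pos_subset hα, hb, by rw [sRefl_apply, hb, one_smul, add_sub_cancel_right]⟩

lemma sRefl_mem_image_orbitI {lamd : V} (hdom : R.IsDominant lamd)
    (hlat : lamd ∈ R.weightLattice) {I : Set (Fin R.n)}
    (hI : {i | ⟪lamd, coroot (R.simple i)⟫ = 0 ∨ ⟪lamd, coroot (R.simple i)⟫ = 1} ⊆ I)
    {g : V → V} (hg : g ∈ R.weyl) {b : V} (hb : b ∈ g '' R.orbitI I lamd) {α : V}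
    (hα : α ∈ R.roots) (h1 : ⟪b, coroot α⟫ = 1) : sRefl α b ∈ g '' R.orbitI I lamd := by
  obtain ⟨_, ⟨w, hw, rfl⟩, rfl⟩ := hb
  obtain ⟨f, hf, hfs⟩ :=
    R.exists_linearIsometryEquiv_of_mem_weyl (R.comp_mem_weyl hg (R.weylI_subset_weyl I hw))
  have hfγ : f (f.symm α) = α := f.apply_symm_apply α
  have hpair : ⟪lamd, coroot (f.symm α)⟫ = 1 := by
    rw [← inner_map_coroot_map f, hfγ, hf]; exact h1
  have hγ : f.symm α ∈ R.pos := by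
    refine (R.mem_pos_or_neg_mem_pos (R.map_mem_roots hfs hα)).resolve_right fun hneg => ?_
    have := hdom.inner_coroot_nonneg hneg
    rw [coroot_neg, inner_neg_right, hpair] at this
    linarith
  refine ⟨w (lamd - f.symm α), R.map_mem_orbitI hw
    (R.orbitI_mono hI _ (R.sub_mem_orbitI_of_inner_coroot_eq_one hdom hlat hγ hpair)), ?_⟩
  have : lamd - f.symm α = sRefl (f.symm α) lamd := by rw [sRefl_apply, hpair, one_smul]
  rw [this, ← Function.comp_apply (f := g), ← hf, ← sRefl_map, hfγ, hf, Function.comp_apply]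

lemma sameComponent_of_mem_image_orbitI {k : V → ℕ} (hk : R.IsWInvariant k) {g : V → V}
    (hg : g ∈ R.weyl) {lamd ρ : V} (hlat : lamd ∈ R.weightLattice)
    (hρ : ∀ j, ⟪ρ, coroot (R.simple j)⟫ = k (R.simple j)) {I : Set (Fin R.n)}
    (hI : I ⊆ {i | ⟪lamd, coroot (R.simple i)⟫ = 0 ∨ ⟪lamd, coroot (R.simple i)⟫ = 1})
    {mu : V} (hmu : mu ∈ g '' R.orbitI I (lamd + ρ)) :
    SameComponent (R.symFire k) (g (lamd + ρ)) mu := by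
  obtain ⟨_, ⟨w, hw, rfl⟩, rfl⟩ := hmu
  have hρlat : ρ ∈ R.weightLattice :=
    R.mem_weightLattice_of_inner_simple fun j => ⟨k (R.simple j), by simp [hρ]⟩
  refine R.sameComponent_map_of_mem_weylI hk hg (R.add_mem_weightLattice hlat hρlat)
    (fun j hj => ?_) hw
  rw [inner_add_left, hρ j]
  rcases hI hj with h | h <;> rw [h, abs_of_nonneg (by positivity)] <;> linarith

lemma setOf_sameComponent_symFire_zero_subset {lamd : V} (hdom : R.IsDominant lamd)
    (hlat : lamd ∈ R.weightLattice) {I : Set (Fin R.n)}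
    (hI : {i | ⟪lamd, coroot (R.simple i)⟫ = 0 ∨ ⟪lamd, coroot (R.simple i)⟫ = 1} ⊆ I)
    {g : V → V} (hg : g ∈ R.weyl) :
    {mu | SameComponent (R.symFire fun _ => 0) (g lamd) mu} ⊆ g '' R.orbitI I lamd := by
  intro mu h
  induction h with
  | refl => exact ⟨lamd, R.self_mem_orbitI I lamd, rfl⟩
  | tail _ hbc ih =>
    obtain ⟨α, hα, h1, rfl⟩ := R.exists_sRefl_of_symFire_zero hbc
    exact R.sRefl_mem_image_orbitI hdom hlat hI hg ih hα h1

end RootSystemData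

theorem statement13_general (R : RootSystemData V)
    (fw : Fin R.n → V)
    (hfw : ∀ i j, ⟪fw i, coroot (R.simple j)⟫ = if i = j then (1 : ℝ) else 0)
    (dm : V → V)
    (hdm : ∀ lam ∈ R.weightLattice, dm lam ∈ R.orbit lam ∧ R.IsDominant (dm lam))
    (wl : V → V → V)
    (hwl : ∀ lam ∈ R.weightLattice, wl lam ∈ R.weyl ∧ wl lam (dm lam) = lam ∧
      ∀ w ∈ R.weyl, w (dm lam) = lam → R.coxLen (wl lam) ≤ R.coxLen w)
    (k : V → ℕ) (hk : R.IsWInvariant k)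
    (lam : V) (hlam : lam ∈ R.weightLattice) :
    (∀ mu ∈ (wl lam) ''
        (R.orbitI (R.I01 dm lam) (dm lam + ∑ i, (k (R.simple i) : ℝ) • fw i)),
      SameComponent (R.symFire k) (etaMap R fw wl k lam) mu) ∧
    ((∀ α, k α = 0) →
      {mu | SameComponent (R.symFire k) (etaMap R fw wl k lam) mu}
        = (wl lam) '' (R.orbitI (R.I01 dm lam) (dm lam))) := by
  obtain ⟨⟨w₀, hw₀, hdm_eq⟩, hdom⟩ := hdm lam hlam
  obtain ⟨hwlW, hwl_dm, -⟩ := hwl lam hlam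
  have hdm_lat : dm lam ∈ R.weightLattice := hdm_eq ▸ R.map_mem_weightLattice hw₀ hlam
  set ρ := ∑ i, (k (R.simple i) : ℝ) • fw i
  have hρ : ∀ j, ⟪ρ, coroot (R.simple j)⟫ = k (R.simple j) := by
    simp [ρ, sum_inner, real_inner_smul_left, hfw]
  have hη : etaMap R fw wl k lam = wl lam (dm lam + ρ) := by
    obtain ⟨f, hf, -⟩ := R.exists_linearIsometryEquiv_of_mem_weyl hwlW
    rw [etaMap, ← hf, map_add, hf, hwl_dm]
  have hreach : ∀ mu ∈ wl lam '' R.orbitI (R.I01 dm lam) (dm lam + ρ),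
      SameComponent (R.symFire k) (etaMap R fw wl k lam) mu := fun mu hmu =>
    hη ▸ R.sameComponent_of_mem_image_orbitI hk hwlW hdm_lat hρ subset_rfl hmu
  refine ⟨hreach, fun hk0 => ?_⟩
  obtain rfl : k = fun _ => 0 := funext hk0
  have hρ0 : ρ = 0 := by simp [ρ]
  rw [hρ0, add_zero] at hη hreach
  exact subset_antisymm
    (hη ▸ R.setOf_sameComponent_symFire_zero_subset hdom hdm_lat subset_rfl hwlW) hreach

/-- The connected component of symmetric interval-firing containing `η_𝐤(λ)`
contains the orbit `w_λ(W_{I^{0,1}_λ}(η_𝐤(λ_dom)))`; for `𝐤 = 0` it equals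
`w_λ(W_{I^{0,1}_λ}(λ_dom))`. -/
theorem statement13 (R : RootSystemData V)
    (fw : Fin R.n → V)
    (hfw : ∀ i j, ⟪fw i, coroot (R.simple j)⟫ = if i = j then (1 : ℝ) else 0)
    (dm : V → V)
    (hdm : ∀ lam ∈ R.weightLattice, dm lam ∈ R.orbit lam ∧ R.IsDominant (dm lam))
    (wl : V → V → V)
    (hwl : ∀ lam ∈ R.weightLattice, wl lam ∈ R.weyl ∧ wl lam (dm lam) = lam ∧
      ∀ w ∈ R.weyl, w (dm lam) = lam → R.coxLen (wl lam) ≤ R.coxLen w)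
    (k : V → ℕ) (hk : R.IsWInvariant k)
    (lam : V) (hlam : lam ∈ R.weightLattice)
    (hno : ∀ α ∈ R.pos, ⟪lam, coroot α⟫ ≠ -1) :
    (∀ mu ∈ (wl lam) ''
        (R.orbitI (R.I01 dm lam) (dm lam + ∑ i, (k (R.simple i) : ℝ) • fw i)),
      SameComponent (R.symFire k) (etaMap R fw wl k lam) mu) ∧
    ((∀ α, k α = 0) →
      {mu | SameComponent (R.symFire k) (etaMap R fw wl k lam) mu}
        = (wl lam) '' (R.orbitI (R.I01 dm lam) (dm lam))) :=
  statement13_general R fw hfw dm hdm wl hwl k hk lam hlam
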